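/- For any admissible control u ∈ 𝕌₁ and any (x, u, t) ∈ ℝ^n × ℝ^m × [0,T], the function g_u(s; x, u, t) := ∫_t^s r(x(τ), u(τ)) dτ + Q(x(s), u(s), s), where x is the Carathéodory trajectory with x(t) = x driven by u and u(t) = u, is non-decreasing in s on [t, T]. -/

import Mathlib

open MeasureTheory Set

noncomputable section

/-- Carathéodory solution of `ẋ(s) = f(x(s), u(s))` on `[t, T]`:
`x s = x t + ∫_t^s f(x(τ), u(τ)) dτ` (with the integrand interval integrable). -/
def IsTrajectory {n m : ℕ}
    (f : EuclideanSpace ℝ (Fin n) → EuclideanSpace ℝ (Fin m) → EuclideanSpace ℝ (Fin n))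
    (t T : ℝ) (x : ℝ → EuclideanSpace ℝ (Fin n)) (u : ℝ → EuclideanSpace ℝ (Fin m)) : Prop :=
  ∀ s ∈ Set.Icc t T,
    IntervalIntegrable (fun τ => f (x τ) (u τ)) MeasureTheory.volume t s ∧
      x s = x t + ∫ τ in t..s, f (x τ) (u τ)

/-- The total cost `∫_t^T r(x(s), u(s)) ds + q(x(T))`. -/
def cost {n m : ℕ}
    (r : EuclideanSpace ℝ (Fin n) → EuclideanSpace ℝ (Fin m) → ℝ)
    (q : EuclideanSpace ℝ (Fin n) → ℝ) (t T : ℝ)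
    (x : ℝ → EuclideanSpace ℝ (Fin n)) (u : ℝ → EuclideanSpace ℝ (Fin m)) : ℝ :=
  (∫ s in t..T, r (x s) (u s)) + q (x T)

/-- Admissible controls `𝕌₁`: Lipschitz continuous on `[0, T]` with
Lipschitz constant (equivalently, `‖u̇‖_{L^∞}` bound) `M`. -/
def Adm {m : ℕ} (M T : ℝ) (u : ℝ → EuclideanSpace ℝ (Fin m)) : Prop :=
  LipschitzOnWith (Real.toNNReal M) u (Set.Icc 0 T)

/-- The Q-function
`Q(x₀,u₀,t) = inf { ∫_t^T r(x(s),u(s)) ds + q(x(T)) : u ∈ 𝕌₁, x(t) = x₀, u(t) = u₀ }`. -/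
def Qfun {n m : ℕ}
    (f : EuclideanSpace ℝ (Fin n) → EuclideanSpace ℝ (Fin m) → EuclideanSpace ℝ (Fin n))
    (r : EuclideanSpace ℝ (Fin n) → EuclideanSpace ℝ (Fin m) → ℝ)
    (q : EuclideanSpace ℝ (Fin n) → ℝ) (M T : ℝ)
    (x₀ : EuclideanSpace ℝ (Fin n)) (u₀ : EuclideanSpace ℝ (Fin m)) (t : ℝ) : ℝ :=
  sInf { c : ℝ | ∃ x u, Adm M T u ∧ IsTrajectory f t T x u ∧
      x t = x₀ ∧ u t = u₀ ∧ c = cost r q t T x u }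

/-!
Dynamic programming: following the given control on `[s₁, s₂]` and then any admissible
continuation from `(x(s₂), u(s₂))` is again admissible from `(x(s₁), u(s₁))`, so
`Q(x(s₁), u(s₁), s₁) ≤ ∫_{s₁}^{s₂} r + Q(x(s₂), u(s₂), s₂)`, which is the monotonicity of `g_u`.
-/

def concatAt {E : Type*} (s : ℝ) (g h : ℝ → E) : ℝ → E :=
  fun τ => if τ ≤ s then g τ else h τ

section Concat

variable {E F G : Type*} {s a b : ℝ} {g h : ℝ → E}

theorem eqOn_concatAt_Iic : EqOn (concatAt s g h) g (Iic s) :=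
  fun _ hτ => if_pos hτ

theorem eqOn_concatAt_Ioi : EqOn (concatAt s g h) h (Ioi s) :=
  fun _ hτ => if_neg (not_le.mpr hτ)

theorem concatAt_of_le {τ : ℝ} (hτ : τ ≤ s) : concatAt s g h τ = g τ :=
  eqOn_concatAt_Iic hτ

theorem concatAt_of_ge {τ : ℝ} (hs : g s = h s) (hτ : s ≤ τ) : concatAt s g h τ = h τ := by
  rcases hτ.eq_or_lt with rfl | hτ
  · exact (concatAt_of_le le_rfl).trans hs
  · exact eqOn_concatAt_Ioi hτ

theorem concatAt_map₂ (φ : E → F → G) {g' h' : ℝ → F} :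
    (fun τ => φ (concatAt s g h τ) (concatAt s g' h' τ)) =
      concatAt s (fun τ => φ (g τ) (g' τ)) (fun τ => φ (h τ) (h' τ)) :=
  funext fun τ => apply_ite₂ φ (τ ≤ s) _ _ _ _

theorem lipschitzOnWith_concatAt [PseudoMetricSpace E] {K : NNReal}
    (hg : LipschitzOnWith K g (Icc a s)) (hh : LipschitzOnWith K h (Icc s b)) (hs : g s = h s) :
    LipschitzOnWith K (concatAt s g h) (Icc a b) := by
  have across : ∀ τ ∈ Icc a b, ∀ σ ∈ Icc a b, τ ≤ s → s ≤ σ →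
      dist (concatAt s g h τ) (concatAt s g h σ) ≤ K * dist τ σ := by
    intro τ hτ σ hσ hτs hsσ
    rw [concatAt_of_le hτs, concatAt_of_ge hs hsσ]
    calc dist (g τ) (h σ) ≤ dist (g τ) (g s) + dist (h s) (h σ) := hs ▸ dist_triangle _ _ _
      _ ≤ K * dist τ s + K * dist s σ :=
          add_le_add (hg.dist_le_mul τ ⟨hτ.1, hτs⟩ s ⟨hτ.1.trans hτs, le_rfl⟩)
            (hh.dist_le_mul s ⟨le_rfl, hsσ.trans hσ.2⟩ σ ⟨hsσ, hσ.2⟩)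
      _ = K * dist τ σ := by
          rw [Real.dist_eq, Real.dist_eq, Real.dist_eq, abs_of_nonpos (by linarith),
            abs_of_nonpos (by linarith), abs_of_nonpos (by linarith)]
          ring
  refine LipschitzOnWith.of_dist_le_mul fun τ hτ σ hσ => ?_
  rcases le_total τ s with hτs | hsτ <;> rcases le_total σ s with hσs | hsσ
  · rw [concatAt_of_le hτs, concatAt_of_le hσs]
    exact hg.dist_le_mul τ ⟨hτ.1, hτs⟩ σ ⟨hσ.1, hσs⟩
  · exact across τ hτ σ hσ hτs hsσ
  · rw [dist_comm, dist_comm τ]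
    exact across σ hσ τ hτ hσs hsτ
  · rw [concatAt_of_ge hs hsτ, concatAt_of_ge hs hsσ]
    exact hh.dist_le_mul τ ⟨hsτ, hτ.2⟩ σ ⟨hsσ, hσ.2⟩

variable [NormedAddCommGroup E]

theorem intervalIntegrable_concatAt (has : a ≤ s) (hsb : s ≤ b)
    (hg : IntervalIntegrable g volume a s) (hh : IntervalIntegrable h volume s b) :
    IntervalIntegrable (concatAt s g h) volume a b := by
  have hg' : IntervalIntegrable (concatAt s g h) volume a s :=
    hg.congr fun τ hτ => (eqOn_concatAt_Iic (uIoc_of_le has ▸ hτ).2).symm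
  have hh' : IntervalIntegrable (concatAt s g h) volume s b :=
    hh.congr fun τ hτ => (eqOn_concatAt_Ioi (uIoc_of_le hsb ▸ hτ).1).symm
  exact hg'.trans hh'

theorem integral_concatAt [NormedSpace ℝ E] (has : a ≤ s) (hsb : s ≤ b)
    (hg : IntervalIntegrable g volume a s) (hh : IntervalIntegrable h volume s b) :
    ∫ τ in a..b, concatAt s g h τ = (∫ τ in a..s, g τ) + ∫ τ in s..b, h τ := by
  have hg' : ∫ τ in a..s, concatAt s g h τ = ∫ τ in a..s, g τ :=
    intervalIntegral.integral_congr_ae <| .of_forall fun τ hτ =>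
      eqOn_concatAt_Iic (uIoc_of_le has ▸ hτ).2
  have hh' : ∫ τ in s..b, concatAt s g h τ = ∫ τ in s..b, h τ :=
    intervalIntegral.integral_congr_ae <| .of_forall fun τ hτ =>
      eqOn_concatAt_Ioi (uIoc_of_le hsb ▸ hτ).1
  rw [← intervalIntegral.integral_add_adjacent_intervals (intervalIntegrable_concatAt has le_rfl hg (by simp)) (intervalIntegrable_concatAt le_rfl hsb (by simp) hh), hg', hh']

end Concat

section Control

variable {n m : ℕ}
  {f : EuclideanSpace ℝ (Fin n) → EuclideanSpace ℝ (Fin m) → EuclideanSpace ℝ (Fin n)}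
  {r : EuclideanSpace ℝ (Fin n) → EuclideanSpace ℝ (Fin m) → ℝ}
  {q : EuclideanSpace ℝ (Fin n) → ℝ} {M T t s : ℝ}
  {x x' : ℝ → EuclideanSpace ℝ (Fin n)} {u u' : ℝ → EuclideanSpace ℝ (Fin m)}

namespace IsTrajectory

theorem intervalIntegrable (hx : IsTrajectory f t T x u) {a b : ℝ} (ha : a ∈ Icc t T)
    (hb : b ∈ Icc t T) : IntervalIntegrable (fun τ => f (x τ) (u τ)) volume a b :=
  (hx a ha).1.symm.trans (hx b hb).1

theorem restrict (hx : IsTrajectory f t T x u) (hs : s ∈ Icc t T) : IsTrajectory f s T x u := by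
  intro τ hτ
  have hτ' : τ ∈ Icc t T := ⟨hs.1.trans hτ.1, hτ.2⟩
  refine ⟨hx.intervalIntegrable hs hτ', ?_⟩
  rw [(hx τ hτ').2, (hx s hs).2, add_assoc,
    intervalIntegral.integral_add_adjacent_intervals (hx s hs).1 (hx.intervalIntegrable hs hτ')]

theorem continuousOn (hx : IsTrajectory f t T x u) : ContinuousOn x (Icc t T) := by
  rcases lt_or_ge T t with hTt | htT
  · simp [Icc_eq_empty_of_lt hTt]
  have hprim := intervalIntegral.continuousOn_primitive_interval' (hx T ⟨htT, le_rfl⟩).1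
    left_mem_uIcc
  rw [uIcc_of_le htT] at hprim
  exact (continuousOn_const.add hprim).congr fun τ hτ => (hx τ hτ).2

theorem intervalIntegrable_comp {G : Type*} [NormedAddCommGroup G]
    {φ : EuclideanSpace ℝ (Fin n) → EuclideanSpace ℝ (Fin m) → G}
    (hx : IsTrajectory f t T x u) (hu : ContinuousOn u (Icc t T))
    (hφ : Continuous fun p : EuclideanSpace ℝ (Fin n) × EuclideanSpace ℝ (Fin m) => φ p.1 p.2)
    {a b : ℝ} (ha : a ∈ Icc t T) (hb : b ∈ Icc t T) :
    IntervalIntegrable (fun τ => φ (x τ) (u τ)) volume a b :=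
  (hφ.comp_continuousOn
    ((hx.continuousOn.prodMk hu).mono (uIcc_subset_Icc ha hb))).intervalIntegrable

theorem concatAt (hx : IsTrajectory f t T x u) (hx' : IsTrajectory f s T x' u')
    (hs : s ∈ Icc t T) (hxs : x s = x' s) :
    IsTrajectory f t T (concatAt s x x') (concatAt s u u') := by
  intro τ hτ
  rw [concatAt_map₂ f, concatAt_of_le hs.1]
  rcases le_total τ s with hτs | hsτ
  · have heq : EqOn (_root_.concatAt s (fun σ => f (x σ) (u σ)) fun σ => f (x' σ) (u' σ))
        (fun σ => f (x σ) (u σ)) (uIoc t τ) :=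
      fun σ hσ => eqOn_concatAt_Iic ((uIoc_of_le hτ.1 ▸ hσ).2.trans hτs)
    refine ⟨(hx τ hτ).1.congr heq.symm, ?_⟩
    rw [concatAt_of_le hτs, intervalIntegral.integral_congr_ae (.of_forall heq)]
    exact (hx τ hτ).2
  · have hτ' : τ ∈ Icc s T := ⟨hsτ, hτ.2⟩
    refine ⟨intervalIntegrable_concatAt hs.1 hsτ (hx s hs).1 (hx' τ hτ').1, ?_⟩
    rw [concatAt_of_ge hxs hsτ, integral_concatAt hs.1 hsτ (hx s hs).1 (hx' τ hτ').1,
      (hx' τ hτ').2, ← hxs, (hx s hs).2, add_assoc]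

end IsTrajectory

theorem Adm.concatAt (hu : Adm M T u) (hu' : Adm M T u') (hs : s ∈ Icc 0 T) (hus : u s = u' s) :
    Adm M T (concatAt s u u') :=
  lipschitzOnWith_concatAt (hu.mono (Icc_subset_Icc le_rfl hs.2))
    (hu'.mono (Icc_subset_Icc hs.1 le_rfl)) hus

theorem cost_concatAt (hs : s ∈ Icc t T) (hxs : x s = x' s)
    (hr : IntervalIntegrable (fun τ => r (x τ) (u τ)) volume t s)
    (hr' : IntervalIntegrable (fun τ => r (x' τ) (u' τ)) volume s T) :
    cost r q t T (concatAt s x x') (concatAt s u u') =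
      (∫ τ in t..s, r (x τ) (u τ)) + cost r q s T x' u' := by
  unfold cost
  rw [concatAt_map₂ r, integral_concatAt hs.1 hs.2 hr hr', concatAt_of_ge hxs hs.2, add_assoc]

theorem abs_cost_le {Cr Cq : ℝ} (hrb : ∀ x u, |r x u| ≤ Cr) (hqb : ∀ x, |q x| ≤ Cq) :
    |cost r q t T x u| ≤ Cr * |T - t| + Cq :=
  have hint : ‖∫ τ in t..T, r (x τ) (u τ)‖ ≤ Cr * |T - t| :=
    intervalIntegral.norm_integral_le_of_norm_le_const fun τ _ => hrb (x τ) (u τ)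
  (abs_add_le _ _).trans (add_le_add hint (hqb _))

theorem Qfun_le_cost {Cr Cq : ℝ} (hrb : ∀ x u, |r x u| ≤ Cr) (hqb : ∀ x, |q x| ≤ Cq)
    (hu : Adm M T u) (hx : IsTrajectory f t T x u) :
    Qfun f r q M T (x t) (u t) t ≤ cost r q t T x u := by
  refine csInf_le ⟨-(Cr * |T - t| + Cq), ?_⟩ ⟨x, u, hu, hx, rfl, rfl, rfl⟩
  rintro _ ⟨x, u, -, -, -, -, rfl⟩
  exact neg_le_of_abs_le (abs_cost_le hrb hqb)

theorem Qfun_le_integral_add_Qfun {Cr Cq : ℝ} (hrb : ∀ x u, |r x u| ≤ Cr)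
    (hqb : ∀ x, |q x| ≤ Cq)
    (hr : Continuous fun p : EuclideanSpace ℝ (Fin n) × EuclideanSpace ℝ (Fin m) => r p.1 p.2)
    (ht : 0 ≤ t) (hu : Adm M T u) (hx : IsTrajectory f t T x u) (hs : s ∈ Icc t T) :
    Qfun f r q M T (x t) (u t) t ≤
      (∫ τ in t..s, r (x τ) (u τ)) + Qfun f r q M T (x s) (u s) s := by
  rw [← sub_le_iff_le_add']
  refine le_csInf ⟨_, x, u, hu, hx.restrict hs, rfl, rfl, rfl⟩ ?_
  rintro _ ⟨x', u', hu', hx', hxs, hus, rfl⟩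
  have hs₀ : s ∈ Icc 0 T := ⟨ht.trans hs.1, hs.2⟩
  have hr_int : IntervalIntegrable (fun τ => r (x τ) (u τ)) volume t s :=
    hx.intervalIntegrable_comp (hu.continuousOn.mono (Icc_subset_Icc ht le_rfl)) hr
      ⟨le_rfl, hs.1.trans hs.2⟩ hs
  have hr_int' : IntervalIntegrable (fun τ => r (x' τ) (u' τ)) volume s T :=
    hx'.intervalIntegrable_comp (hu'.continuousOn.mono (Icc_subset_Icc hs₀.1 le_rfl)) hr
      ⟨le_rfl, hs.2⟩ ⟨hs.2, le_rfl⟩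
  have hglued := Qfun_le_cost hrb hqb (hu.concatAt hu' hs₀ hus.symm) (hx.concatAt hx' hs hxs.symm)
  rw [concatAt_of_le hs.1, concatAt_of_le hs.1, cost_concatAt hs hxs.symm hr_int hr_int']
    at hglued
  linarith

end Control

theorem g_monotoneOn_general {n m : ℕ}
    (f : EuclideanSpace ℝ (Fin n) → EuclideanSpace ℝ (Fin m) → EuclideanSpace ℝ (Fin n))
    (r : EuclideanSpace ℝ (Fin n) → EuclideanSpace ℝ (Fin m) → ℝ)
    (q : EuclideanSpace ℝ (Fin n) → ℝ) (M T : ℝ)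
    (Cr Cq : ℝ)
    (hrb : ∀ x u, |r x u| ≤ Cr) (hqb : ∀ x, |q x| ≤ Cq)
    (Kr : NNReal)
    (hrl : LipschitzWith Kr (fun p : EuclideanSpace ℝ (Fin n) × EuclideanSpace ℝ (Fin m) => r p.1 p.2))
    (t : ℝ) (ht : t ∈ Set.Icc 0 T)
    (x : ℝ → EuclideanSpace ℝ (Fin n)) (u : ℝ → EuclideanSpace ℝ (Fin m))
    (hu : Adm M T u) (hx : IsTrajectory f t T x u) :
    MonotoneOn
      (fun s => (∫ τ in t..s, r (x τ) (u τ)) + Qfun f r q M T (x s) (u s) s)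
      (Set.Icc t T) := by
  intro s₁ hs₁ s₂ hs₂ h₁₂
  have hr_int : ∀ a ∈ Icc t T, ∀ b ∈ Icc t T,
      IntervalIntegrable (fun τ => r (x τ) (u τ)) volume a b := fun a ha b hb =>
    hx.intervalIntegrable_comp (hu.continuousOn.mono (Icc_subset_Icc ht.1 le_rfl))
      hrl.continuous ha hb
  have hdp := Qfun_le_integral_add_Qfun hrb hqb hrl.continuous (ht.1.trans hs₁.1) hu
    (hx.restrict hs₁) ⟨h₁₂, hs₂.2⟩
  dsimp only
  rw [← intervalIntegral.integral_add_adjacent_intervals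
    (hr_int t ⟨le_rfl, ht.2⟩ s₁ hs₁) (hr_int s₁ hs₁ s₂ hs₂)]
  linarith

/-- Along any admissible control, the function
`g_u(s) := ∫_t^s r(x(τ), u(τ)) dτ + Q(x(s), u(s), s)` is non-decreasing on `[t, T]`. -/
theorem g_monotoneOn {n m : ℕ}
    (f : EuclideanSpace ℝ (Fin n) → EuclideanSpace ℝ (Fin m) → EuclideanSpace ℝ (Fin n))
    (r : EuclideanSpace ℝ (Fin n) → EuclideanSpace ℝ (Fin m) → ℝ)
    (q : EuclideanSpace ℝ (Fin n) → ℝ) (M T : ℝ) (hM : 0 < M)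
    (Cf Cr Cq : ℝ)
    (hfb : ∀ x u, ‖f x u‖ ≤ Cf) (hrb : ∀ x u, |r x u| ≤ Cr) (hqb : ∀ x, |q x| ≤ Cq)
    (Kf Kr Kq : NNReal)
    (hfl : LipschitzWith Kf (fun p : EuclideanSpace ℝ (Fin n) × EuclideanSpace ℝ (Fin m) => f p.1 p.2))
    (hrl : LipschitzWith Kr (fun p : EuclideanSpace ℝ (Fin n) × EuclideanSpace ℝ (Fin m) => r p.1 p.2))
    (hql : LipschitzWith Kq q)
    (x₀ : EuclideanSpace ℝ (Fin n)) (u₀ : EuclideanSpace ℝ (Fin m))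
    (t : ℝ) (ht : t ∈ Set.Icc 0 T)
    (x : ℝ → EuclideanSpace ℝ (Fin n)) (u : ℝ → EuclideanSpace ℝ (Fin m))
    (hu : Adm M T u) (hx : IsTrajectory f t T x u) (hx₀ : x t = x₀) (hu₀ : u t = u₀) :
    MonotoneOn
      (fun s => (∫ τ in t..s, r (x τ) (u τ)) + Qfun f r q M T (x s) (u s) s)
      (Set.Icc t T) :=
  g_monotoneOn_general f r q M T Cr Cq hrb hqb Kr hrl t ht x u hu hx

end
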